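/- For all integers n, k with 2 ≤ k ≤ n − 1, there exists an n-state binary weakly acyclic automaton A of rank 2 and a synchronizing set S of k states of A such that some word of length (k − 1)(n − k) synchronizes S and every word synchronizing S has length at least (k − 1)(n − k). -/

import Mathlib

/-- The extension of the transition function to words. -/
def deltaStar {Q A : Type*} (δ : Q → A → Q) (q : Q) (w : List A) : Q := w.foldl δ q

/-- A simple cycle: pairwise distinct states `q 0, …, q (k-1)` together with letters
mapping each state of the cycle to the next one (cyclically). -/
def IsSimpleCycle {Q A : Type*} (δ : Q → A → Q) (k : ℕ) (q : Fin k → Q) : Prop :=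
  0 < k ∧ Function.Injective q ∧
    ∃ x : Fin k → A, ∀ i : Fin k, δ (q i) (x i) = q ⟨(i.val + 1) % k, Nat.mod_lt _ i.pos⟩

/-- An automaton is weakly acyclic if all its simple cycles are self-loops. -/
def WeaklyAcyclic {Q A : Type*} (δ : Q → A → Q) : Prop :=
  ∀ (k : ℕ) (q : Fin k → Q), IsSimpleCycle δ k q → k = 1

/-- A sink state is fixed by every letter. -/
def IsSink {Q A : Type*} (δ : Q → A → Q) (q : Q) : Prop := ∀ x : A, δ q x = q

/-- The word `w` synchronizes the set `S` of states. -/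
def SyncsSet {Q A : Type*} (δ : Q → A → Q) (S : Finset Q) (w : List A) : Prop :=
  ∃ q : Q, ∀ s ∈ S, deltaStar δ s w = q

/-- A set of states is synchronizing if some word synchronizes it. -/
def IsSyncSet {Q A : Type*} (δ : Q → A → Q) (S : Finset Q) : Prop :=
  ∃ w : List A, SyncsSet δ S w

/-- The rank of a word with respect to an automaton: the size of the image of the
state set under the word. -/
def wordRank {Q A : Type*} [Fintype Q] [DecidableEq Q] (δ : Q → A → Q) (w : List A) : ℕ :=
  (Finset.univ.image fun q => deltaStar δ q w).card

/-- The rank of an automaton: the minimum rank of a word with respect to it. -/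
noncomputable def autRank {Q A : Type*} [Fintype Q] [DecidableEq Q] (δ : Q → A → Q) : ℕ :=
  sInf {r | ∃ w : List A, wordRank δ w = r}

/-- The rank of a word with respect to a subset of states. -/
def subsetWordRank {Q A : Type*} [DecidableEq Q] (δ : Q → A → Q) (S : Finset Q)
    (w : List A) : ℕ :=
  (S.image fun q => deltaStar δ q w).card

/-- The rank of a subset of states: the minimum rank of a word with respect to it. -/
noncomputable def subsetRank {Q A : Type*} [DecidableEq Q] (δ : Q → A → Q) (S : Finset Q) : ℕ :=
  sInf {r | ∃ w : List A, subsetWordRank δ S w = r}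

/-- `w^j`: the word obtained by `j` concatenations of `w`. -/
def wordPow {A : Type*} (w : List A) (j : ℕ) : List A := (List.replicate j w).flatten

/-!
The automaton has `g = k - 1` *gate* states `0, …, g - 1`, fixed by `a` and pushed one step up
by `b`; a *track* `g, …, g + s` (with `s = n - k - 1`) walked up by `a`, whose last state is a
sink; and a *trap* `g + s + 1`, to which `b` sends the inner track states. The synchronizing set
is `S = gates ∪ {sink}`.

No transition decreases a state, so every simple cycle is a self-loop. Sink and trap are fixed
by every word, and `b^(n-2)` sends every state to one of them, so the rank is 2. A gate state
reaches the track only by `b` from the top gate, and `b` may not be read while some image of `S`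
is strictly inside the track, since it would be lost in the trap. Hence the `g` gate states are
escorted along the track one at a time, each costing one `b` and `s` letters `a`: this gives the
lower bound `g (s + 1) = (k - 1)(n - k)`, attained by `(b a^s)^g`.
-/

section Automata

variable {Q A : Type*} (δ : Q → A → Q)

@[simp]
theorem deltaStar_nil (q : Q) : deltaStar δ q [] = q := rfl

@[simp]
theorem deltaStar_cons (q : Q) (x : A) (w : List A) :
    deltaStar δ q (x :: w) = deltaStar δ (δ q x) w := rfl

theorem deltaStar_append (q : Q) (w v : List A) :
    deltaStar δ q (w ++ v) = deltaStar δ (deltaStar δ q w) v :=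
  List.foldl_append ..

theorem deltaStar_replicate_of_fixed {q : Q} {x : A} (h : δ q x = q) (t : ℕ) :
    deltaStar δ q (List.replicate t x) = q := by
  induction t with
  | zero => rfl
  | succ t ih => rw [List.replicate_succ, deltaStar_cons, h, ih]

variable {δ}

theorem IsSink.deltaStar_eq {q : Q} (h : IsSink δ q) (w : List A) : deltaStar δ q w = q := by
  induction w with
  | nil => rfl
  | cons x w ih => rw [deltaStar_cons, h x, ih]

theorem SyncsSet.deltaStar_eq_of_isSink {S : Finset Q} {w : List A} {q : Q}
    (hw : SyncsSet δ S w) (hq : q ∈ S) (hsink : IsSink δ q) :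
    ∀ s ∈ S, deltaStar δ s w = q := by
  obtain ⟨z, hz⟩ := hw
  obtain rfl : q = z := (hsink.deltaStar_eq w).symm.trans (hz q hq)
  exact hz

theorem weaklyAcyclic_of_le_step [PartialOrder Q] (h : ∀ q x, q ≤ δ q x) :
    WeaklyAcyclic δ := by
  rintro K q ⟨hK, hinj, x, hx⟩
  by_contra hK1
  set f : ℕ → Q := fun m => q ⟨m % K, Nat.mod_lt _ hK⟩
  have hf : Monotone f := monotone_nat_of_le_succ fun m => by
    have hstep := h (f m) (x ⟨m % K, Nat.mod_lt _ hK⟩)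
    rw [hx] at hstep
    exact hstep.trans_eq (congrArg q (Fin.ext (Nat.mod_add_mod m K 1)))
  have h01 : f 0 = f 1 :=
    le_antisymm (hf zero_le_one) (by simpa [f] using hf (show 1 ≤ K by omega))
  have h1K : 1 % K = 1 := Nat.mod_eq_of_lt (by omega)
  simpa [Fin.ext_iff, h1K] using hinj h01

theorem card_le_wordRank_of_isSink [Fintype Q] [DecidableEq Q] {T : Finset Q}
    (hT : ∀ q ∈ T, IsSink δ q) (w : List A) : T.card ≤ wordRank δ w :=
  Finset.card_le_card fun q hq =>
    Finset.mem_image.mpr ⟨q, Finset.mem_univ _, (hT q hq).deltaStar_eq w⟩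

theorem autRank_eq_of_le_wordRank [Fintype Q] [DecidableEq Q] {r : ℕ}
    (hle : ∀ w, r ≤ wordRank δ w) (w : List A) (hw : wordRank δ w ≤ r) : autRank δ = r :=
  le_antisymm (Nat.sInf_le ⟨w, le_antisymm hw (hle w)⟩)
    (le_csInf ⟨_, w, rfl⟩ (by rintro _ ⟨v, rfl⟩; exact hle v))

theorem wordPow_succ (w : List A) (i : ℕ) : wordPow w (i + 1) = w ++ wordPow w i := by
  simp [wordPow, List.replicate_succ]

theorem length_wordPow (w : List A) (i : ℕ) : (wordPow w i).length = i * w.length := by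
  simp [wordPow]

end Automata

namespace GateTrack

/-- The letter `a` is `false`, `b` is `true`, and the trap is `Fin.last`. -/
def step (g s : ℕ) (q : Fin (g + s + 2)) : Bool → Fin (g + s + 2)
  | false => if h : g ≤ q.val ∧ q.val < g + s then ⟨q.val + 1, by omega⟩ else q
  | true =>
    if h : q.val < g then ⟨q.val + 1, by omega⟩ else if q.val < g + s then Fin.last _ else q

def sink (g s : ℕ) : Fin (g + s + 2) := ⟨g + s, by omega⟩

def block (s : ℕ) : List Bool := true :: List.replicate s false

variable {g s : ℕ}

theorem le_step (q : Fin (g + s + 2)) (x : Bool) : q ≤ step g s q x := by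
  rw [Fin.le_iff_val_le_val]
  cases x <;> simp only [step] <;> split_ifs <;> simp; omega

theorem isSink_sink : IsSink (step g s) (sink g s) := by
  intro x
  cases x <;> simp [step, sink]

theorem isSink_last : IsSink (step g s) (Fin.last _) := by
  intro x
  cases x <;> simp [step]
  omega

theorem step_false_of_lt {q : Fin (g + s + 2)} (hq : q.val < g) : step g s q false = q := by
  simp [step]
  omega

theorem val_step_false_of_track {q : Fin (g + s + 2)} (h1 : g ≤ q.val) (h2 : q.val < g + s) :
    (step g s q false).val = q.val + 1 := by
  simp [step, h1, h2]

theorem val_step_true_of_lt {q : Fin (g + s + 2)} (hq : q.val < g) :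
    (step g s q true).val = q.val + 1 := by
  simp [step, hq]

theorem step_true_of_track {q : Fin (g + s + 2)} (h1 : g ≤ q.val) (h2 : q.val < g + s) :
    step g s q true = Fin.last _ := by
  simp [step, h2]
  omega

theorem val_lt_val_step_true {q : Fin (g + s + 2)} (hq : q.val < g + s) :
    q.val < (step g s q true).val := by
  rcases lt_or_ge q.val g with hg | hg
  · rw [val_step_true_of_lt hg]
    omega
  · rw [step_true_of_track hg hq, Fin.val_last]
    omega

theorem min_le_val_deltaStar_replicate_true (q : Fin (g + s + 2)) (t : ℕ) :
    min (q.val + t) (g + s) ≤ (deltaStar (step g s) q (List.replicate t true)).val := by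
  induction t generalizing q with
  | zero => simp
  | succ t ih =>
    rw [List.replicate_succ, deltaStar_cons]
    refine le_trans ?_ (ih _)
    by_cases hq : q.val < g + s
    · have := val_lt_val_step_true hq
      omega
    · have := Fin.le_iff_val_le_val.mp (le_step q true)
      omega

theorem val_deltaStar_replicate_false {q : Fin (g + s + 2)} {t : ℕ} (h1 : g ≤ q.val)
    (h2 : q.val + t ≤ g + s) :
    (deltaStar (step g s) q (List.replicate t false)).val = q.val + t := by
  induction t generalizing q with
  | zero => rfl
  | succ t ih =>
    have hstep := val_step_false_of_track h1 (by omega)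
    rw [List.replicate_succ, deltaStar_cons, ih] <;> omega

theorem val_deltaStar_block_of_lt {q : Fin (g + s + 2)} (hq : q.val + 1 < g) :
    (deltaStar (step g s) q (block s)).val = q.val + 1 := by
  have hstep := val_step_true_of_lt (s := s) (show q.val < g by omega)
  rw [block, deltaStar_cons, deltaStar_replicate_of_fixed _ (step_false_of_lt (by omega)), hstep]

theorem deltaStar_block_of_eq {q : Fin (g + s + 2)} (hq : q.val + 1 = g) :
    deltaStar (step g s) q (block s) = sink g s := by
  have hstep := val_step_true_of_lt (s := s) (show q.val < g by omega)
  ext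
  rw [block, deltaStar_cons, val_deltaStar_replicate_false] <;> simp only [hstep, sink] <;> omega

theorem deltaStar_wordPow_block {q : Fin (g + s + 2)} {i : ℕ} (hq : q.val < g)
    (hi : g ≤ q.val + i) : deltaStar (step g s) q (wordPow (block s) i) = sink g s := by
  induction i generalizing q with
  | zero => omega
  | succ i ih =>
    rw [wordPow_succ, deltaStar_append]
    rcases (show q.val + 1 < g ∨ q.val + 1 = g by omega) with h | h
    · have hblock := val_deltaStar_block_of_lt (s := s) h
      exact ih (by omega) (by omega)
    · rw [deltaStar_block_of_eq h]
      exact isSink_sink.deltaStar_eq _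

theorem autRank_step : autRank (step g s) = 2 := by
  have hne : sink g s ≠ Fin.last _ := by simp [sink, Fin.ext_iff]
  refine autRank_eq_of_le_wordRank (fun w => ?_) (List.replicate (g + s) true) ?_
  · simpa [Finset.card_pair hne] using card_le_wordRank_of_isSink
      (T := {sink g s, Fin.last _}) (by simp [isSink_sink, isSink_last]) w
  · refine (Finset.card_le_card (t := {sink g s, Fin.last _}) fun r hr => ?_).trans
      Finset.card_le_two
    obtain ⟨q, -, rfl⟩ := Finset.mem_image.mp hr
    have := min_le_val_deltaStar_replicate_true (s := s) q (g + s)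
    have := (deltaStar (step g s) q (List.replicate (g + s) true)).isLt
    simp only [Finset.mem_insert, Finset.mem_singleton, Fin.ext_iff, sink, Fin.val_last]
    omega

theorem deltaStar_eq_of_gates_cons_true {w : List Bool} {i : ℕ} {z : Fin (g + s + 2)}
    (hgates : ∀ q : Fin (g + s + 2), i ≤ q.val → q.val < g →
      deltaStar (step g s) q (true :: w) = z)
    (q : Fin (g + s + 2)) (h1 : i < q.val) (h2 : q.val ≤ g) : deltaStar (step g s) q w = z := by
  have hstep : step g s ⟨q.val - 1, by omega⟩ true = q :=
    Fin.ext ((val_step_true_of_lt (show q.val - 1 < g by omega)).trans (by simp; omega))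
  simpa [hstep] using
    hgates ⟨q.val - 1, by omega⟩ (show i ≤ q.val - 1 by omega) (show q.val - 1 < g by omega)

/-- The gates `i, …, g - 1` are still to be escorted, and `r` is the track position of the one
under way. -/
theorem le_length_of_deltaStar_eq_sink (w : List Bool) {i : ℕ} {r : Fin (g + s + 2)}
    (hi : i ≤ g) (hrg : g ≤ r.val)
    (hgates : ∀ q : Fin (g + s + 2), i ≤ q.val → q.val < g →
      deltaStar (step g s) q w = sink g s)
    (hr : deltaStar (step g s) r w = sink g s) :
    (g - i) * (s + 1) + (g + s - r.val) ≤ w.length := by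
  induction w generalizing i r with
  | nil =>
    have hi' : i = g := by
      by_contra hne
      have := congrArg Fin.val (hgates ⟨i, by omega⟩ le_rfl (by simp; omega))
      simp [sink] at this
      omega
    have := congrArg Fin.val hr
    simp only [deltaStar_nil, sink] at this
    simp [hi']
    omega
  | cons x w ih =>
    cases x with
    | false =>
      have hgates' : ∀ q : Fin (g + s + 2), i ≤ q.val → q.val < g →
          deltaStar (step g s) q w = sink g s := fun q h1 h2 => by
        simpa [step_false_of_lt h2] using hgates q h1 h2
      have hadv : (step g s r false).val ≤ r.val + 1 := by
        simp only [step]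
        split_ifs <;> simp
      have := ih hi (hrg.trans (le_step r false)) hgates' hr
      simp only [List.length_cons]
      omega
    | true =>
      have hrs : g + s ≤ r.val := by
        by_contra! hrs
        rw [deltaStar_cons, step_true_of_track hrg hrs, isSink_last.deltaStar_eq] at hr
        simp [sink, Fin.ext_iff] at hr
      rcases lt_or_ge i g with hig | hig
      · have hshift := deltaStar_eq_of_gates_cons_true hgates
        have := ih (i := i + 1) (r := ⟨g, by omega⟩) (by omega) le_rfl
          (fun q h1 h2 => hshift q h1 h2.le) (hshift _ hig le_rfl)
        have hsplit : (g - i) * (s + 1) = (g - (i + 1)) * (s + 1) + (s + 1) := by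
          rw [show g - i = g - (i + 1) + 1 by omega, add_one_mul]
        simp only [List.length_cons] at this ⊢
        omega
      · simp only [List.length_cons, Nat.sub_eq_zero_of_le hig]
        omega

end GateTrack

open GateTrack in
/-- For all `2 ≤ k ≤ n - 1` there is an `n`-state binary weakly acyclic automaton of rank 2
with a synchronizing set `S` of `k` states such that some word of length `(k-1)(n-k)`
synchronizes `S` and every word synchronizing `S` has length at least `(k-1)(n-k)`. -/
theorem stmt8 (n k : ℕ) (h2 : 2 ≤ k) (hk : k ≤ n - 1) :
    ∃ (δ : Fin n → Bool → Fin n) (S : Finset (Fin n)),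
      WeaklyAcyclic δ ∧ autRank δ = 2 ∧ S.card = k ∧ IsSyncSet δ S ∧
      (∃ w : List Bool, SyncsSet δ S w ∧ w.length = (k - 1) * (n - k)) ∧
      (∀ w : List Bool, SyncsSet δ S w → (k - 1) * (n - k) ≤ w.length) := by
  obtain ⟨g, s, rfl, rfl⟩ : ∃ g s, k = g + 1 ∧ n = g + s + 2 :=
    ⟨k - 1, n - k - 1, by omega, by omega⟩
  rw [show g + 1 - 1 = g by omega, show g + s + 2 - (g + 1) = s + 1 by omega]
  let S : Finset (Fin (g + s + 2)) := insert (sink g s) (Finset.Iio ⟨g, by omega⟩)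
  have hsinkS : sink g s ∈ S := Finset.mem_insert_self _ _
  have hgateS : ∀ q : Fin (g + s + 2), q.val < g → q ∈ S := fun q hq =>
    Finset.mem_insert_of_mem (Finset.mem_Iio.mpr (Fin.lt_def.mpr hq))
  have hsync : SyncsSet (step g s) S (wordPow (block s) g) := by
    refine ⟨sink g s, fun q hq => ?_⟩
    rcases Finset.mem_insert.mp hq with rfl | hq
    · exact isSink_sink.deltaStar_eq _
    · exact deltaStar_wordPow_block (Fin.lt_def.mp (Finset.mem_Iio.mp hq)) (by omega)
  have hcard : S.card = g + 1 := by
    rw [Finset.card_insert_of_notMem (by simp [sink, Fin.lt_def]), Fin.card_Iio]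
  refine ⟨step g s, S, weaklyAcyclic_of_le_step le_step, autRank_step, hcard, ⟨_, hsync⟩,
    ⟨_, hsync, by simp [length_wordPow, block]⟩, fun w hw => ?_⟩
  have hS := hw.deltaStar_eq_of_isSink hsinkS isSink_sink
  simpa [sink] using le_length_of_deltaStar_eq_sink w (i := 0) (Nat.zero_le g) (by simp [sink])
    (fun q _ hq => hS q (hgateS q hq)) (hS _ hsinkS)
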